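/- arXiv:2603.24778 — 3 statements merged into one kernel-verified Lean document; each statement's English description precedes it below -/
import Mathlib

section
/- For any Hermitian M×M complex matrix H and any Hermitian positive semi-definite M×M complex matrix Q, the inequality 0 ≤ 4·Tr[HQ]² + 4·Tr[H²Q]·Tr[Q] − 8·Tr[HQHQ] holds. -/
open Matrix
open scoped ComplexOrder

/-!
Write `Q = S * S` with `S = √Q` Hermitian. For `X = S * H` and `Y = S`, the squared
Hilbert–Schmidt norm of the antisymmetric part of `X ⊗ Y + Y ⊗ X` is nonnegative, which reads
`Tr(HQHQ) + Tr(H²Q²) ≤ Tr(H²Q) Tr(Q) + Tr(HQ)²`. The squared norm of the commutator `[H, Q]`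
gives `Tr(HQHQ) ≤ Tr(H²Q²)`, and adding the two inequalities gives the claim.
-/

open scoped Kronecker MatrixOrder

namespace Matrix

variable {R 𝕜 n : Type*} [Fintype n] [DecidableEq n]

lemma trace_kronecker_mul_permMatrix_prodComm [CommSemiring R] (A B : Matrix n n R) :
    ((A ⊗ₖ B) * Equiv.Perm.permMatrix R (Equiv.prodComm n n)).trace = (A * B).trace := by
  simp [Matrix.trace, mul_apply, Fintype.sum_prod_type, ite_and]

omit [Fintype n] in
lemma conjTranspose_permMatrix_prodComm [Semiring R] [StarRing R] :
    (Equiv.Perm.permMatrix R (Equiv.prodComm n n))ᴴ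
      = Equiv.Perm.permMatrix R (Equiv.prodComm n n) :=
  conjTranspose_permMatrix _

lemma permMatrix_prodComm_mul_self [Semiring R] :
    Equiv.Perm.permMatrix R (Equiv.prodComm n n) * Equiv.Perm.permMatrix R (Equiv.prodComm n n)
      = 1 := by
  rw [← permMatrix_mul, ← permMatrix_one]
  congr 1

variable [RCLike 𝕜]

lemma trace_conjTranspose_mul_add_le (X Y : Matrix n n 𝕜) :
    (Xᴴ * X * (Yᴴ * Y)).trace + (Xᴴ * Y * (Yᴴ * X)).trace
      ≤ (Xᴴ * X).trace * (Yᴴ * Y).trace + (Xᴴ * Y).trace * (Yᴴ * X).trace := by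
  -- `P` is the flip `x ⊗ y ↦ y ⊗ x`; `(1 - P) / 2` projects onto the antisymmetric tensors.
  set P := Equiv.Perm.permMatrix 𝕜 (Equiv.prodComm n n) with hP
  set W := X ⊗ₖ Y + Y ⊗ₖ X
  have hWW : Wᴴ * W = (Xᴴ * X) ⊗ₖ (Yᴴ * Y) + (Xᴴ * Y) ⊗ₖ (Yᴴ * X)
      + (Yᴴ * X) ⊗ₖ (Xᴴ * Y) + (Yᴴ * Y) ⊗ₖ (Xᴴ * X) := by
    simp only [W, conjTranspose_add, conjTranspose_kronecker, add_mul, mul_add,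
      ← mul_kronecker_mul]
    abel
  have hW : (Wᴴ * W).trace
      = 2 * ((Xᴴ * X).trace * (Yᴴ * Y).trace + (Xᴴ * Y).trace * (Yᴴ * X).trace) := by
    simp only [hWW, trace_add, trace_kronecker]
    ring
  have hWP : (Wᴴ * W * P).trace
      = 2 * ((Xᴴ * X * (Yᴴ * Y)).trace + (Xᴴ * Y * (Yᴴ * X)).trace) := by
    simp only [hWW, add_mul, trace_add, hP, trace_kronecker_mul_permMatrix_prodComm]
    rw [trace_mul_comm (Yᴴ * X), trace_mul_comm (Yᴴ * Y), two_mul]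
    abel
  have hsq : (1 - P) * (1 - P) = 2 • (1 - P) := by
    rw [sub_mul, one_mul, mul_sub, mul_one, hP, permMatrix_prodComm_mul_self]
    abel
  have hV : ((W * (1 - P))ᴴ * (W * (1 - P))).trace
      = 2 * ((Wᴴ * W).trace - (Wᴴ * W * P).trace) := by
    calc ((W * (1 - P))ᴴ * (W * (1 - P))).trace
        = (Wᴴ * W * ((1 - P) * (1 - P))).trace := by
          rw [conjTranspose_mul, conjTranspose_sub, conjTranspose_one, hP,
            conjTranspose_permMatrix_prodComm, ← hP, Matrix.mul_assoc, trace_mul_comm]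
          simp only [Matrix.mul_assoc]
      _ = 2 * ((Wᴴ * W).trace - (Wᴴ * W * P).trace) := by
          rw [hsq, Matrix.mul_smul, trace_smul, Matrix.mul_sub, Matrix.mul_one, trace_sub,
            nsmul_eq_mul, Nat.cast_ofNat]
  have hnonneg := (posSemidef_conjTranspose_mul_self (W * (1 - P))).trace_nonneg
  rw [hV, hW, hWP, ← mul_sub, ← mul_assoc, ← mul_zero (2 * 2 : 𝕜)] at hnonneg
  exact sub_nonneg.1 (le_of_mul_le_mul_left hnonneg (by norm_num))

lemma IsHermitian.trace_mul_sq_le {A B : Matrix n n 𝕜} (hA : A.IsHermitian)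
    (hB : B.IsHermitian) :
    ((A * B) ^ 2).trace ≤ (A ^ 2 * B ^ 2).trace := by
  have hC : (A * B - B * A)ᴴ = B * A - A * B := by
    rw [conjTranspose_sub, conjTranspose_mul, conjTranspose_mul, hA.eq, hB.eq]
  have hBAAB : (B * A * (A * B)).trace = (A ^ 2 * B ^ 2).trace := by
    rw [Matrix.mul_assoc, trace_mul_comm, sq, sq]
    simp only [Matrix.mul_assoc]
  have hABBA : (A * B * (B * A)).trace = (A ^ 2 * B ^ 2).trace := by
    rw [trace_mul_comm, hBAAB]
  have hBABA : ((B * A) ^ 2).trace = ((A * B) ^ 2).trace := by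
    rw [sq, sq, Matrix.mul_assoc, trace_mul_comm]
    simp only [Matrix.mul_assoc]
  have hnonneg : 0 ≤ 2 * ((A ^ 2 * B ^ 2).trace - ((A * B) ^ 2).trace) := by
    convert (posSemidef_conjTranspose_mul_self (A * B - B * A)).trace_nonneg using 1
    simp only [hC, sub_mul, mul_sub, trace_sub, hBAAB, hABBA, hBABA, ← sq]
    ring
  rw [← mul_zero 2] at hnonneg
  exact sub_nonneg.1 (le_of_mul_le_mul_left hnonneg two_pos)

end Matrix

theorem stmt_0_general (M : ℕ)
    (H Q : Matrix (Fin M) (Fin M) ℂ)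
    (hH : H.IsHermitian) (hQ : Q.PosSemidef) :
    0 ≤ (4 * ((H * Q).trace) ^ 2 + 4 * ((H ^ 2 * Q).trace) * Q.trace
        - 8 * ((H * Q * H * Q).trace)).re := by
  set S := CFC.sqrt Q
  have hS : S.IsHermitian := (CFC.sqrt_nonneg Q).posSemidef.isHermitian
  have hSS : S * S = Q := CFC.sqrt_mul_sqrt_self Q hQ.nonneg
  have hSSA : ∀ A, S * (S * A) = Q * A := fun A => by rw [← Matrix.mul_assoc, hSS]
  have hHQH : (H * (Q * H)).trace = (H ^ 2 * Q).trace := by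
    rw [← Matrix.mul_assoc, trace_mul_cycle, sq]
  have hHQQH : (H * (Q * (Q * H))).trace = (H ^ 2 * Q ^ 2).trace := by
    rw [← Matrix.mul_assoc Q, ← Matrix.mul_assoc, trace_mul_cycle, sq, sq]
  have key : (H * Q * H * Q).trace + (H ^ 2 * Q ^ 2).trace
      ≤ (H ^ 2 * Q).trace * Q.trace + (H * Q).trace ^ 2 := by
    have := trace_conjTranspose_mul_add_le (S * H) S
    simp only [conjTranspose_mul, hH.eq, hS.eq, Matrix.mul_assoc, hSSA, hSS, hHQH, hHQQH,
      trace_mul_comm Q H] at this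
    simpa only [Matrix.mul_assoc, sq] using this
  have hcomm := hH.trace_mul_sq_le hQ.isHermitian
  rw [sq (H * Q), ← Matrix.mul_assoc] at hcomm
  have hnonneg : 0 ≤ 4 * (H * Q).trace ^ 2 + 4 * (H ^ 2 * Q).trace * Q.trace
      - 8 * (H * Q * H * Q).trace := by
    convert mul_nonneg zero_le_four (add_nonneg (sub_nonneg.2 key) (sub_nonneg.2 hcomm)) using 1
    ring
  exact (Complex.nonneg_iff.1 hnonneg).1

/-- For any Hermitian M×M complex matrix H and any Hermitian positive semi-definite
M×M complex matrix Q, 0 ≤ 4·Tr[HQ]² + 4·Tr[H²Q]·Tr[Q] − 8·Tr[HQHQ]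
(the expression is real, so we state nonnegativity of its real part). -/
theorem stmt_0 (M : ℕ) (hM : 0 < M)
    (H Q : Matrix (Fin M) (Fin M) ℂ)
    (hH : H.IsHermitian) (hQ : Q.PosSemidef) :
    0 ≤ (4 * ((H * Q).trace) ^ 2 + 4 * ((H ^ 2 * Q).trace) * Q.trace
        - 8 * ((H * Q * H * Q).trace)).re :=
  stmt_0_general M H Q hH hQ
end

section
/- Under the hypotheses of the optimal two-mode squeezed state (s_i² = (N/2)(1 − q), s_j² = (N/2)(1 + q) with q = ḡ/√(ḡ²+Δg²), g_i = ḡ − Δg√(s_j²/s_i²), g_j = ḡ + Δg√(s_i²/s_j²), Δg > 0, N > 0), the quantity F := 8 g_i² s_i²(s_i²+1) + 8 g_j² s_j²(s_j²+1) equals exactly 8ḡ²N² + 4Δg²N² + 8(ḡ² + Δg²)N. -/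
/-!
With `r = √(ḡ² + Δg²)` and `q = ḡ / r` we have `(r + ḡ)(r - ḡ) = Δg²`, so
`s_j² / s_i² = (r + ḡ) / (r - ḡ) = ((r + ḡ) / Δg)²`; the square roots therefore simplify to
`g_i = -r` and `g_j = r`. Both coefficients then have square `ḡ² + Δg²`, and the identity is
polynomial in `N`, `q` and `r`.
-/

open Real

lemma abs_lt_sqrt_sq_add_sq {a b : ℝ} (hb : b ≠ 0) : |a| < √(a ^ 2 + b ^ 2) :=
  (lt_sqrt (abs_nonneg a)).mpr (by rw [sq_abs]; exact lt_add_of_pos_right _ (by positivity))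

lemma sqrt_one_add_div_one_sub {a b : ℝ} (hb : 0 < b) :
    √((1 + a / √(a ^ 2 + b ^ 2)) / (1 - a / √(a ^ 2 + b ^ 2))) = (√(a ^ 2 + b ^ 2) + a) / b := by
  obtain ⟨hra, har⟩ := abs_lt.mp (abs_lt_sqrt_sq_add_sq (a := a) hb.ne')
  set r := √(a ^ 2 + b ^ 2)
  have hr : r ^ 2 = a ^ 2 + b ^ 2 := sq_sqrt (by positivity)
  have hr0 : r ≠ 0 := by linarith
  have hsub : r - a ≠ 0 := by linarith
  rw [← sqrt_sq (div_nonneg (by linarith) hb.le)]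
  congr 1
  field_simp
  linear_combination -(r + a) * hr

lemma sqrt_one_sub_div_one_add {a b : ℝ} (hb : 0 < b) :
    √((1 - a / √(a ^ 2 + b ^ 2)) / (1 + a / √(a ^ 2 + b ^ 2))) = (√(a ^ 2 + b ^ 2) - a) / b := by
  simpa [neg_div, ← sub_eq_add_neg] using sqrt_one_add_div_one_sub (a := -a) hb

/-- QFI of the optimal two-mode squeezed state:
F = 8 g_i² s_i²(s_i²+1) + 8 g_j² s_j²(s_j²+1) = 8ḡ²N² + 4Δg²N² + 8(ḡ²+Δg²)N. -/
theorem stmt_7 (N gbar Δg : ℝ) (hN : 0 < N) (hΔg : 0 < Δg)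
    (q si2 sj2 gi gj : ℝ)
    (hq : q = gbar / Real.sqrt (gbar ^ 2 + Δg ^ 2))
    (hsi2 : si2 = (N / 2) * (1 - q))
    (hsj2 : sj2 = (N / 2) * (1 + q))
    (hgi : gi = gbar - Δg * Real.sqrt (sj2 / si2))
    (hgj : gj = gbar + Δg * Real.sqrt (si2 / sj2)) :
    8 * gi ^ 2 * si2 * (si2 + 1) + 8 * gj ^ 2 * sj2 * (sj2 + 1)
      = 8 * gbar ^ 2 * N ^ 2 + 4 * Δg ^ 2 * N ^ 2
        + 8 * (gbar ^ 2 + Δg ^ 2) * N := by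
  set r := √(gbar ^ 2 + Δg ^ 2)
  have hr : r ^ 2 = gbar ^ 2 + Δg ^ 2 := sq_sqrt (by positivity)
  have hr0 : r ≠ 0 := by positivity
  have hN2 : N / 2 ≠ 0 := by positivity
  have hgi' : gi = -r := by
    rw [hgi, hsj2, hsi2, mul_div_mul_left _ _ hN2, hq, sqrt_one_add_div_one_sub hΔg]
    field_simp
    ring
  have hgj' : gj = r := by
    rw [hgj, hsj2, hsi2, mul_div_mul_left _ _ hN2, hq, sqrt_one_sub_div_one_add hΔg]
    field_simp
    ring
  have hqr : q * r = gbar := by rw [hq]; field_simp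
  rw [hgi', hgj', hsi2, hsj2]
  linear_combination (4 * N ^ 2 + 8 * N) * hr + 4 * N ^ 2 * (q * r + gbar) * hqr
end

section
/- Homodyne Fisher information optimization: for r > 0, g ≠ 0, the function F(φ) = 2g²·sinh²(2r)·sin²(2(gλ+φ)) / (cosh(2r) + sinh(2r)·cos(2(gλ+φ)))² attains its maximum value 8g²·sinh²(r)·(sinh²(r)+1) at the phase φ = (1/2)·arccos(tanh(2r)) − gλ + π/2. -/
/-!
Write `c = cosh 2r`, `s = sinh 2r` and `θ = 2(gλ + φ)`. Since `c² - s² = 1`,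
`sin² θ = (c + s cos θ)² - (s + c cos θ)²`, so `F φ ≤ 2g² s² = 8g² sinh² r (sinh² r + 1)`, with
equality exactly when `cos θ = -s / c = -tanh 2r`, which is what the chosen phase achieves.
-/

open Real

theorem sin_sq_eq_sq_sub_sq {c s : ℝ} (hcs : c ^ 2 - s ^ 2 = 1) (θ : ℝ) :
    sin θ ^ 2 = (c + s * cos θ) ^ 2 - (s + c * cos θ) ^ 2 := by
  linear_combination sin_sq_add_cos_sq θ - (1 - cos θ ^ 2) * hcs

theorem mul_sin_sq_div_le {c s : ℝ} (hcs : c ^ 2 - s ^ 2 = 1) {a : ℝ} (ha : 0 ≤ a) (θ : ℝ) :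
    a * sin θ ^ 2 / (c + s * cos θ) ^ 2 ≤ a := by
  refine div_le_of_le_mul₀ (sq_nonneg _) ha (mul_le_mul_of_nonneg_left ?_ ha)
  rw [sin_sq_eq_sq_sub_sq hcs]
  linarith [sq_nonneg (s + c * cos θ)]

theorem mul_sin_sq_div_eq {c s θ : ℝ} (hcs : c ^ 2 - s ^ 2 = 1) (hθ : s + c * cos θ = 0)
    (a : ℝ) : a * sin θ ^ 2 / (c + s * cos θ) ^ 2 = a := by
  have hden : c * (c + s * cos θ) = 1 := by linear_combination hcs + s * hθ
  have hden₀ : c + s * cos θ ≠ 0 := right_ne_zero_of_mul_eq_one hden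
  rw [sin_sq_eq_sq_sub_sq hcs, hθ]
  field_simp
  ring

theorem sinh_add_cosh_mul_cos_arccos_tanh_add_pi (x : ℝ) :
    sinh x + cosh x * cos (arccos (tanh x) + π) = 0 := by
  rw [cos_add_pi, cos_arccos (neg_one_lt_tanh x).le (tanh_lt_one x).le, tanh_eq_sinh_div_cosh]
  field_simp
  ring

theorem sinh_two_mul_sq (x : ℝ) : sinh (2 * x) ^ 2 = 4 * sinh x ^ 2 * (sinh x ^ 2 + 1) := by
  rw [sinh_two_mul, mul_pow, mul_pow, cosh_sq]
  ring

theorem stmt_15_general (r g lam : ℝ) :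
    let F : ℝ → ℝ := fun φ =>
      2 * g ^ 2 * Real.sinh (2 * r) ^ 2 * Real.sin (2 * (g * lam + φ)) ^ 2 /
        (Real.cosh (2 * r) + Real.sinh (2 * r) * Real.cos (2 * (g * lam + φ))) ^ 2
    let φopt : ℝ := (1 / 2) * Real.arccos (Real.tanh (2 * r)) - g * lam + Real.pi / 2
    F φopt = 8 * g ^ 2 * Real.sinh r ^ 2 * (Real.sinh r ^ 2 + 1) ∧
    ∀ φ : ℝ, F φ ≤ 8 * g ^ 2 * Real.sinh r ^ 2 * (Real.sinh r ^ 2 + 1) := by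
  intro F φopt
  have hcs : cosh (2 * r) ^ 2 - sinh (2 * r) ^ 2 = 1 := cosh_sq_sub_sinh_sq _
  have hmax : 8 * g ^ 2 * sinh r ^ 2 * (sinh r ^ 2 + 1) = 2 * g ^ 2 * sinh (2 * r) ^ 2 := by
    rw [sinh_two_mul_sq]
    ring
  have hθopt : 2 * (g * lam + φopt) = arccos (tanh (2 * r)) + π := by
    simp only [φopt]
    ring
  rw [hmax]
  refine ⟨mul_sin_sq_div_eq hcs ?_ _, fun φ => mul_sin_sq_div_le hcs (by positivity) _⟩
  rw [hθopt]
  exact sinh_add_cosh_mul_cos_arccos_tanh_add_pi _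

/-- Homodyne Fisher information optimization: for r > 0 and g ≠ 0, the function
F(φ) = 2g² sinh²(2r) sin²(2(gλ+φ)) / (cosh(2r) + sinh(2r) cos(2(gλ+φ)))²
attains its maximum value 8g² sinh²(r)(sinh²(r)+1) at
φ = (1/2)·arccos(tanh(2r)) − gλ + π/2. -/
theorem stmt_15 (r g lam : ℝ) (hr : 0 < r) (hg : g ≠ 0) :
    let F : ℝ → ℝ := fun φ =>
      2 * g ^ 2 * Real.sinh (2 * r) ^ 2 * Real.sin (2 * (g * lam + φ)) ^ 2 /
        (Real.cosh (2 * r) + Real.sinh (2 * r) * Real.cos (2 * (g * lam + φ))) ^ 2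
    let φopt : ℝ := (1 / 2) * Real.arccos (Real.tanh (2 * r)) - g * lam + Real.pi / 2
    F φopt = 8 * g ^ 2 * Real.sinh r ^ 2 * (Real.sinh r ^ 2 + 1) ∧
    ∀ φ : ℝ, F φ ≤ 8 * g ^ 2 * Real.sinh r ^ 2 * (Real.sinh r ^ 2 + 1) :=
  stmt_15_general r g lam
end
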